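/- Let N be a positive integer and let q, c ∈ ℂ with 0 < |q| < 1, |cq| < 1 and c ≠ 1. Then ∑_{n=1}^∞ c^{n−1} · [ (q^n;q)_N − 1 ] = ∑_{n=1}^{N} [N n]_q · (−1)^n q^{n(n+1)/2} / (1 − cq^n) = (1/(1−c)) · ( (q;q)_N/(cq;q)_N − 1 ). -/

import Mathlib

/-- Finite q-Pochhammer symbol `(x;q)_n = ∏_{k=0}^{n-1} (1 - x q^k)`. -/
noncomputable def qPoch (x q : ℂ) (n : ℕ) : ℂ := ∏ k ∈ Finset.range n, (1 - x * q ^ k)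

/-- Infinite q-Pochhammer symbol `(x;q)_∞ = ∏_{k=0}^{∞} (1 - x q^k)`. -/
noncomputable def qPochInf (x q : ℂ) : ℂ := ∏' k : ℕ, (1 - x * q ^ k)

/-- Gaussian binomial coefficient `[n k]_q`, equal to `0` for `k > n`. -/
noncomputable def gbinom (q : ℂ) (n k : ℕ) : ℂ :=
  if k ≤ n then qPoch q q n / (qPoch q q k * qPoch q q (n - k)) else 0

/-!
Expanding `(q^{n+1};q)_N` by the q-binomial theorem turns the left-hand series into a finite
sum of geometric series in `c q^k`, `1 ≤ k ≤ N`, which gives the middle sum. That sum is the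
partial fraction decomposition of `(q;q)_N / (c;q)_{N+1}` with its `k = 0` term `1/(1-c)`
removed; the decomposition follows by induction on `N` from the q-Pascal rule, which relates the
sums for `N + 1` to those for `N` at `c` and at `c q`.
-/

open Finset

lemma qPoch_zero (x q : ℂ) : qPoch x q 0 = 1 :=
  prod_range_zero _

lemma qPoch_succ (x q : ℂ) (n : ℕ) : qPoch x q (n + 1) = qPoch x q n * (1 - x * q ^ n) :=
  prod_range_succ _ _

lemma qPoch_succ' (x q : ℂ) (n : ℕ) : qPoch x q (n + 1) = qPoch (x * q) q n * (1 - x) := by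
  simp only [qPoch, prod_range_succ', pow_zero, mul_one, mul_assoc, ← pow_succ']

lemma norm_mul_pow_lt_one {x q : ℂ} (hx : ‖x‖ < 1) (hq : ‖q‖ ≤ 1) (k : ℕ) :
    ‖x * q ^ k‖ < 1 := by
  rw [norm_mul, norm_pow]
  exact (mul_le_of_le_one_right (norm_nonneg x) (pow_le_one₀ (norm_nonneg q) hq)).trans_lt hx

lemma qPoch_ne_zero {x q : ℂ} (hx : ‖x‖ < 1) (hq : ‖q‖ ≤ 1) (n : ℕ) : qPoch x q n ≠ 0 :=
  prod_ne_zero_iff.2 fun k _ h =>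
    (norm_mul_pow_lt_one hx hq k).ne (by rw [← sub_eq_zero.1 h, norm_one])

lemma sum_range_succ_eq_add_sum_Icc {M : Type*} [AddCommMonoid M] (f : ℕ → M) (N : ℕ) :
    ∑ n ∈ range (N + 1), f n = f 0 + ∑ n ∈ Icc 1 N, f n := by
  rw [Nat.range_succ_eq_Icc_zero, ← insert_Icc_add_one_left_eq_Icc N.zero_le,
    sum_insert (by simp), zero_add]

lemma gbinom_add (q : ℂ) (m d : ℕ) :
    gbinom q (m + d) m = qPoch q q (m + d) / (qPoch q q m * qPoch q q d) := by
  rw [gbinom, if_pos (Nat.le_add_right m d), Nat.add_sub_cancel_left]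

section GaussianBinomial

variable {q : ℂ} (hq : ∀ n, qPoch q q n ≠ 0)
include hq

lemma gbinom_zero (n : ℕ) : gbinom q n 0 = 1 := by
  simpa [qPoch_zero, hq n] using gbinom_add q 0 n

lemma gbinom_self (n : ℕ) : gbinom q n n = 1 := by
  simpa [qPoch_zero, hq n] using gbinom_add q n 0

omit hq in
lemma gbinom_of_lt {n k : ℕ} (h : n < k) : gbinom q n k = 0 :=
  if_neg h.not_ge

lemma gbinom_succ_succ {N m : ℕ} (hm : m ≤ N) :
    gbinom q (N + 1) (m + 1) = gbinom q N (m + 1) + q ^ (N - m) * gbinom q N m := by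
  obtain ⟨d, rfl⟩ := Nat.exists_eq_add_of_le hm
  rcases d with _ | d
  · simp [gbinom_self hq, gbinom_of_lt]
  · have h₁ := gbinom_add q (m + 1) (d + 1)
    have h₂ := gbinom_add q (m + 1) d
    have h₃ := gbinom_add q m (d + 1)
    rw [show m + 1 + (d + 1) = m + (d + 1) + 1 by ring] at h₁
    rw [show m + 1 + d = m + (d + 1) by ring] at h₂
    have hm := hq (m + 1)
    have hd := hq (d + 1)
    rw [qPoch_succ] at hm hd
    rw [h₁, h₂, h₃, Nat.add_sub_cancel_left, qPoch_succ q q (m + (d + 1)), qPoch_succ q q m,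
      qPoch_succ q q d]
    field_simp [right_ne_zero_of_mul hm, right_ne_zero_of_mul hd, hq m, hq d, hq (m + (d + 1))]
    ring

lemma sum_gbinom_succ (N : ℕ) (f : ℕ → ℂ) :
    ∑ n ∈ range (N + 2), gbinom q (N + 1) n * f n =
      ∑ n ∈ range (N + 1), gbinom q N n * f n +
        ∑ n ∈ range (N + 1), q ^ (N - n) * gbinom q N n * f (n + 1) := by
  have pascal : ∀ n ∈ range (N + 1), gbinom q (N + 1) (n + 1) * f (n + 1) =
      gbinom q N (n + 1) * f (n + 1) + q ^ (N - n) * gbinom q N n * f (n + 1) := fun n hn => by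
    rw [gbinom_succ_succ hq (Nat.lt_succ_iff.1 (mem_range.1 hn))]
    ring
  rw [sum_range_succ', sum_congr rfl pascal, sum_add_distrib, sum_range_succ,
    gbinom_of_lt N.lt_succ_self, sum_range_succ' (fun n => gbinom q N n * f n),
    gbinom_zero hq, gbinom_zero hq]
  ring

theorem qPoch_eq_sum_gbinom (x : ℂ) (N : ℕ) :
    qPoch x q N = ∑ n ∈ range (N + 1), gbinom q N n * ((-1) ^ n * q ^ n.choose 2 * x ^ n) := by
  induction N with
  | zero => simp [qPoch_zero, gbinom_zero hq]
  | succ N ih =>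
    have shift : ∀ n ∈ range (N + 1),
        q ^ (N - n) * gbinom q N n * ((-1) ^ (n + 1) * q ^ (n + 1).choose 2 * x ^ (n + 1)) =
          -(x * q ^ N) * (gbinom q N n * ((-1) ^ n * q ^ n.choose 2 * x ^ n)) := fun n hn => by
      rw [← pow_sub_mul_pow q (Nat.lt_succ_iff.1 (mem_range.1 hn)), Nat.choose_succ_succ',
        Nat.choose_one_right, pow_add]
      ring
    rw [sum_gbinom_succ hq, sum_congr rfl shift, ← mul_sum, ← ih, qPoch_succ]
    ring

theorem sum_gbinom_div_one_sub (N : ℕ) (c : ℂ) (hc : qPoch c q (N + 1) ≠ 0) :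
    ∑ n ∈ range (N + 1), gbinom q N n * ((-1) ^ n * q ^ (n + 1).choose 2 / (1 - c * q ^ n)) =
      qPoch q q N / qPoch c q (N + 1) := by
  induction N generalizing c with
  | zero => simp [qPoch_zero, qPoch_succ, gbinom_zero hq]
  | succ N ih =>
    have shift : ∀ n ∈ range (N + 1), q ^ (N - n) * gbinom q N n *
        ((-1) ^ (n + 1) * q ^ (n + 1 + 1).choose 2 / (1 - c * q ^ (n + 1))) =
          -q ^ (N + 1) * (gbinom q N n * ((-1) ^ n * q ^ (n + 1).choose 2 /
            (1 - c * q * q ^ n))) := fun n hn => by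
      have hpow : q ^ (N + 1) = q ^ (N - n) * q ^ (n + 1) := by
        rw [← pow_add]; congr 1; have := mem_range.1 hn; omega
      rw [hpow, Nat.choose_succ_succ' (n + 1), Nat.choose_one_right, pow_add, pow_succ q n]
      ring
    have hc₁ : qPoch c q (N + 1) ≠ 0 := left_ne_zero_of_mul (qPoch_succ c q (N + 1) ▸ hc)
    have hcq : qPoch (c * q) q (N + 1) ≠ 0 := left_ne_zero_of_mul (qPoch_succ' c q (N + 1) ▸ hc)
    rw [sum_gbinom_succ hq, sum_congr rfl shift, ← mul_sum, ih c hc₁, ih (c * q) hcq]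
    rw [qPoch_succ' c q (N + 1), qPoch_succ (c * q) q N] at hc ⊢
    rw [qPoch_succ' c q N, qPoch_succ q q N]
    obtain ⟨⟨hP, hB⟩, hA⟩ := mul_ne_zero_iff.1 hc |>.imp_left mul_ne_zero_iff.1
    field_simp
    ring

end GaussianBinomial

theorem hasSum_pow_mul_qPoch_sub_one {q c : ℂ} (hq1 : ‖q‖ < 1) (hcq : ‖c * q‖ < 1) (N : ℕ) :
    HasSum (fun n : ℕ => c ^ n * (qPoch (q ^ (n + 1)) q N - 1))
      (∑ k ∈ Icc 1 N, gbinom q N k * ((-1) ^ k * q ^ (k + 1).choose 2 / (1 - c * q ^ k))) := by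
  have hq := qPoch_ne_zero hq1 hq1.le
  have expand : ∀ n : ℕ, c ^ n * (qPoch (q ^ (n + 1)) q N - 1) =
      ∑ k ∈ Icc 1 N, gbinom q N k * ((-1) ^ k * q ^ (k + 1).choose 2) * (c * q ^ k) ^ n := by
    intro n
    rw [qPoch_eq_sum_gbinom hq, sum_range_succ_eq_add_sum_Icc]
    simp only [gbinom_zero hq, Nat.choose_zero_succ, pow_zero, mul_one, add_sub_cancel_left,
      mul_sum]
    refine sum_congr rfl fun k _ => ?_
    rw [Nat.choose_succ_succ', Nat.choose_one_right]
    ring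
  refine funext expand ▸ hasSum_sum fun k hk => ?_
  have hk : ‖c * q ^ k‖ < 1 := by
    obtain ⟨j, rfl⟩ := Nat.exists_eq_add_of_le' (mem_Icc.1 hk).1
    simpa [pow_succ', mul_assoc] using norm_mul_pow_lt_one hcq hq1.le j
  simpa only [div_eq_mul_inv, mul_assoc] using
    (hasSum_geometric_of_norm_lt_one hk).mul_left (gbinom q N k * ((-1) ^ k * q ^ (k + 1).choose 2))

theorem stmt1_general (N : ℕ) (q c : ℂ)
    (hq1 : ‖q‖ < 1) (hcq : ‖c * q‖ < 1) (hc : c ≠ 1) :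
    (∑' n : ℕ, c ^ n * (qPoch (q ^ (n + 1)) q N - 1)
        = ∑ n ∈ Finset.Icc 1 N,
            gbinom q N n * (-1 : ℂ) ^ n * q ^ (n * (n + 1) / 2) / (1 - c * q ^ n))
    ∧ (∑ n ∈ Finset.Icc 1 N,
            gbinom q N n * (-1 : ℂ) ^ n * q ^ (n * (n + 1) / 2) / (1 - c * q ^ n)
        = 1 / (1 - c) * (qPoch q q N / qPoch (c * q) q N - 1)) := by
  have hq := qPoch_ne_zero hq1 hq1.le
  have hc₀ : 1 - c ≠ 0 := sub_ne_zero.2 hc.symm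
  have hP : qPoch (c * q) q N ≠ 0 := qPoch_ne_zero hcq hq1.le N
  have htri : ∀ n : ℕ, n * (n + 1) / 2 = (n + 1).choose 2 := fun n => by
    rw [Nat.choose_two_right, Nat.add_sub_cancel, mul_comm]
  have hpf := sum_gbinom_div_one_sub hq N c (by rw [qPoch_succ']; exact mul_ne_zero hP hc₀)
  rw [sum_range_succ_eq_add_sum_Icc, qPoch_succ'] at hpf
  simp only [gbinom_zero hq, zero_add, Nat.choose_succ_self, pow_zero, one_mul, mul_one] at hpf
  simp only [htri, mul_assoc, mul_div_assoc] at hpf ⊢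
  refine ⟨by simpa only [mul_div_assoc] using (hasSum_pow_mul_qPoch_sub_one hq1 hcq N).tsum_eq, ?_⟩
  rw [eq_sub_of_add_eq' hpf]
  field_simp

theorem stmt1 (N : ℕ) (hN : 1 ≤ N) (q c : ℂ) (hq0 : 0 < ‖q‖)
    (hq1 : ‖q‖ < 1) (hcq : ‖c * q‖ < 1) (hc : c ≠ 1) :
    (∑' n : ℕ, c ^ n * (qPoch (q ^ (n + 1)) q N - 1)
        = ∑ n ∈ Finset.Icc 1 N,
            gbinom q N n * (-1 : ℂ) ^ n * q ^ (n * (n + 1) / 2) / (1 - c * q ^ n))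
    ∧ (∑ n ∈ Finset.Icc 1 N,
            gbinom q N n * (-1 : ℂ) ^ n * q ^ (n * (n + 1) / 2) / (1 - c * q ^ n)
        = 1 / (1 - c) * (qPoch q q N / qPoch (c * q) q N - 1)) :=
  stmt1_general N q c hq1 hcq hc
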